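/- arXiv:0902.4257 — 2 statements merged into one kernel-verified Lean document; each statement's English description precedes it below -/
import Mathlib

section
/- Let X be a complex Banach space which is M-embedded and let Y be a closed subspace of X. Then the quotient space X/Y is M-embedded, i.e., the annihilator of the canonical image of X/Y in (X/Y)*** is an L-summand in (X/Y)***. -/
namespace NormedSpace

/-- The topological dual `E →L[𝕜] 𝕜` (as `NormedSpace.Dual` was in the older Mathlib). -/
abbrev Dual (𝕜 : Type*) [NontriviallyNormedField 𝕜] (E : Type*) [SeminormedAddCommGroup E]
    [NormedSpace 𝕜 E] : Type _ := E →L[𝕜] 𝕜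

end NormedSpace

open NormedSpace

noncomputable section

set_option maxHeartbeats 1000000

/-- The transpose (dual map) of a continuous linear map between (semi)normed spaces:
`ctranspose f` sends a functional `g` to `g ∘ f`. -/
def ctranspose {E F : Type*} [SeminormedAddCommGroup E] [NormedSpace ℂ E]
    [SeminormedAddCommGroup F] [NormedSpace ℂ F] (f : E →L[ℂ] F) :
    Dual ℂ F →L[ℂ] Dual ℂ E :=
  (ContinuousLinearMap.compL ℂ E F ℂ).flip f

/-- A bounded linear projection `P` is an L-projection if `‖z‖ = ‖P z‖ + ‖z - P z‖`
for all `z`. -/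
def IsLProjection {Z : Type*} [SeminormedAddCommGroup Z] [NormedSpace ℂ Z]
    (P : Z →L[ℂ] Z) : Prop :=
  (∀ z, P (P z) = P z) ∧ ∀ z, ‖z‖ = ‖P z‖ + ‖z - P z‖

/-- A complex Banach space `X` is M-embedded if the annihilator `i_X(X)^⊥` is an
L-summand in `X***`. -/
def MEmbedded (X : Type*) [SeminormedAddCommGroup X] [NormedSpace ℂ X] : Prop :=
  ∃ P : Dual ℂ (Dual ℂ (Dual ℂ X)) →L[ℂ] Dual ℂ (Dual ℂ (Dual ℂ X)),
    IsLProjection P ∧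
    Set.range P = {φ : Dual ℂ (Dual ℂ (Dual ℂ X)) |
      ∀ x : X, φ (inclusionInDoubleDual ℂ X x) = 0}

/-!
The canonical projection `π = i_{X*} ∘ (i_X)*` on `X***` has kernel `i_X(X)^⊥`, so an
L-projection onto `i_X(X)^⊥` that kills `i_{X*}(X*)` must be `1 - π`. It does kill it: for
`ψ ∈ X*`, `i_{X*}ψ - P(i_{X*}ψ)` still restricts to `ψ` on `i_X(X)`, so its norm is at least
`‖ψ‖ = ‖i_{X*}ψ‖`, which forces `P(i_{X*}ψ) = 0`. Hence `X` is M-embedded iff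
`‖φ‖ = ‖φ - πφ‖ + ‖πφ‖` on `X***`. For the quotient map `q : X → X/Y`, `q*` is an isometric
embedding, so by Hahn–Banach `q**` maps balls onto balls and `q***` is an isometry; since
`q***` commutes with `π`, the norm identity on `X***` restricts to `(X/Y)***`.
-/

open Filter Topology

section Transpose

variable {E F : Type*} [SeminormedAddCommGroup E] [NormedSpace ℂ E]
  [SeminormedAddCommGroup F] [NormedSpace ℂ F]

lemma norm_ctranspose_apply_le {f : E →L[ℂ] F} (hf : ∀ x, ‖f x‖ ≤ ‖x‖) (g : Dual ℂ F) :
    ‖ctranspose f g‖ ≤ ‖g‖ :=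
  ContinuousLinearMap.opNorm_le_bound _ (norm_nonneg _) fun x =>
    (g.le_opNorm (f x)).trans (by gcongr; exact hf x)

lemma norm_ctranspose_apply_eq {f : E →L[ℂ] F} (hf : ∀ x, ‖f x‖ ≤ ‖x‖)
    (hlift : ∀ y, ∀ ε > 0, ∃ x, f x = y ∧ ‖x‖ < ‖y‖ + ε) (g : Dual ℂ F) :
    ‖ctranspose f g‖ = ‖g‖ := by
  refine le_antisymm (norm_ctranspose_apply_le hf g) <|
    ContinuousLinearMap.opNorm_le_bound _ (norm_nonneg _) fun y => ?_
  have hbound : ∀ ε > 0, ‖g y‖ ≤ ‖ctranspose f g‖ * (‖y‖ + ε) := fun ε hε => by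
    obtain ⟨x, rfl, hx⟩ := hlift y ε hε
    exact ((ctranspose f g).le_opNorm x).trans (by gcongr)
  have hlim : Tendsto (fun ε => ‖ctranspose f g‖ * (‖y‖ + ε)) (𝓝[>] 0)
      (𝓝 (‖ctranspose f g‖ * ‖y‖)) :=
    tendsto_nhdsWithin_of_tendsto_nhds <| Continuous.tendsto' (by fun_prop) _ _ (by simp)
  exact ge_of_tendsto hlim (eventually_nhdsWithin_of_forall hbound)

end Transpose

lemma exists_ctranspose_apply_eq_of_norm_map {E F : Type*} [NormedAddCommGroup E]
    [NormedSpace ℂ E] [SeminormedAddCommGroup F] [NormedSpace ℂ F] {f : E →L[ℂ] F}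
    (hf : ∀ x, ‖f x‖ = ‖x‖) (ψ : Dual ℂ E) : ∃ φ : Dual ℂ F, ctranspose f φ = ψ ∧ ‖φ‖ ≤ ‖ψ‖ := by
  let e := (⟨f.toLinearMap, hf⟩ : E →ₗᵢ[ℂ] F).equivRange
  obtain ⟨φ, hφ, hnorm⟩ :=
    exists_extension_norm_eq _ (ψ.comp e.symm.toLinearIsometry.toContinuousLinearMap)
  refine ⟨φ, ?_, ?_⟩
  · ext x
    exact (hφ (e x)).trans (by simp)
  · rw [hnorm]
    exact (ψ.opNorm_comp_le _).trans <|
      mul_le_of_le_one_right (norm_nonneg ψ) e.symm.toLinearIsometry.norm_toContinuousLinearMap_le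

section TripleDual

variable {E : Type*} [SeminormedAddCommGroup E] [NormedSpace ℂ E]

variable (E) in
def tripleDualProj : Dual ℂ (Dual ℂ (Dual ℂ E)) →L[ℂ] Dual ℂ (Dual ℂ (Dual ℂ E)) :=
  (inclusionInDoubleDual ℂ (Dual ℂ E)).comp (ctranspose (inclusionInDoubleDual ℂ E))

@[simp]
lemma tripleDualProj_apply_inclusionInDoubleDual (φ : Dual ℂ (Dual ℂ (Dual ℂ E))) (x : E) :
    tripleDualProj E φ (inclusionInDoubleDual ℂ E x) = φ (inclusionInDoubleDual ℂ E x) :=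
  rfl

@[simp]
lemma tripleDualProj_tripleDualProj (φ : Dual ℂ (Dual ℂ (Dual ℂ E))) :
    tripleDualProj E (tripleDualProj E φ) = tripleDualProj E φ :=
  rfl

lemma tripleDualProj_eq_zero_iff (φ : Dual ℂ (Dual ℂ (Dual ℂ E))) :
    tripleDualProj E φ = 0 ↔ ∀ x : E, φ (inclusionInDoubleDual ℂ E x) = 0 := by
  refine ⟨fun h x => ?_, fun h => ?_⟩
  · rw [← tripleDualProj_apply_inclusionInDoubleDual, h, zero_apply]
  · have : ctranspose (inclusionInDoubleDual ℂ E) φ = 0 := ContinuousLinearMap.ext h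
    simp [tripleDualProj, this]

lemma tripleDualProj_ctranspose_ctranspose_ctranspose {F : Type*} [SeminormedAddCommGroup F]
    [NormedSpace ℂ F] (f : E →L[ℂ] F) (φ : Dual ℂ (Dual ℂ (Dual ℂ F))) :
    tripleDualProj E (ctranspose (ctranspose (ctranspose f)) φ) =
      ctranspose (ctranspose (ctranspose f)) (tripleDualProj F φ) :=
  rfl

lemma range_one_sub_tripleDualProj :
    Set.range ⇑(1 - tripleDualProj E) =
      {φ : Dual ℂ (Dual ℂ (Dual ℂ E)) | ∀ x : E, φ (inclusionInDoubleDual ℂ E x) = 0} := by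
  ext φ
  refine ⟨?_, fun hφ => ⟨φ, ?_⟩⟩
  · rintro ⟨ψ, rfl⟩ x
    simp
  · simp [(tripleDualProj_eq_zero_iff φ).2 hφ]

end TripleDual

lemma IsLProjection.norm_apply_eq_zero_of_norm_le {Z : Type*} [SeminormedAddCommGroup Z]
    [NormedSpace ℂ Z] {P : Z →L[ℂ] Z} (hP : IsLProjection P) {z : Z} (hz : ‖z‖ ≤ ‖z - P z‖) :
    ‖P z‖ = 0 :=
  le_antisymm (by linarith [hP.2 z]) (norm_nonneg _)

lemma IsLProjection.eq_one_sub_tripleDualProj {E : Type*} [NormedAddCommGroup E]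
    [NormedSpace ℂ E] {P : Dual ℂ (Dual ℂ (Dual ℂ E)) →L[ℂ] Dual ℂ (Dual ℂ (Dual ℂ E))}
    (hP : IsLProjection P)
    (hrange : Set.range P = {φ : Dual ℂ (Dual ℂ (Dual ℂ E)) |
      ∀ x : E, φ (inclusionInDoubleDual ℂ E x) = 0}) :
    P = 1 - tripleDualProj E := by
  have hfix : ∀ φ ∈ Set.range P, P φ = φ := by
    rintro _ ⟨φ, rfl⟩
    exact hP.1 φ
  have hkill (ψ : Dual ℂ E) : P (inclusionInDoubleDual ℂ (Dual ℂ E) ψ) = 0 := by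
    set iψ := inclusionInDoubleDual ℂ (Dual ℂ E) ψ
    have hann : ∀ x : E, P iψ (inclusionInDoubleDual ℂ E x) = 0 := by
      have := Set.mem_range_self (f := P) iψ
      rwa [hrange] at this
    have hnorm : ‖P iψ‖ = 0 := by
      refine hP.norm_apply_eq_zero_of_norm_le ?_
      rw [show ‖iψ‖ = ‖ψ‖ from (inclusionInDoubleDualLi ℂ).norm_map ψ]
      refine ContinuousLinearMap.opNorm_le_bound _ (norm_nonneg _) fun x => ?_
      calc ‖ψ x‖ = ‖(iψ - P iψ) (inclusionInDoubleDual ℂ E x)‖ := by simp [iψ, hann x]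
        _ ≤ ‖iψ - P iψ‖ * ‖inclusionInDoubleDual ℂ E x‖ := ContinuousLinearMap.le_opNorm _ _
        _ ≤ ‖iψ - P iψ‖ * ‖x‖ := by gcongr; exact double_dual_bound ℂ E x
    ext Φ
    simpa [hnorm] using (P iψ).le_opNorm Φ
  ext1 φ
  have hmem : (1 - tripleDualProj E) φ ∈ Set.range P := by
    rw [hrange, ← range_one_sub_tripleDualProj]
    exact ⟨φ, rfl⟩
  calc P φ = P (tripleDualProj E φ) + P ((1 - tripleDualProj E) φ) := by
        rw [← map_add]
        simp
    _ = (1 - tripleDualProj E) φ := by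
        rw [hfix _ hmem, show P (tripleDualProj E φ) = 0 from hkill _, zero_add]

theorem mEmbedded_iff_norm_eq (E : Type*) [NormedAddCommGroup E] [NormedSpace ℂ E] :
    MEmbedded E ↔ ∀ φ : Dual ℂ (Dual ℂ (Dual ℂ E)),
      ‖φ‖ = ‖φ - tripleDualProj E φ‖ + ‖tripleDualProj E φ‖ := by
  constructor
  · rintro ⟨P, hP, hrange⟩ φ
    simpa [hP.eq_one_sub_tripleDualProj hrange] using hP.2 φ
  · intro h
    exact ⟨1 - tripleDualProj E, ⟨fun φ => by simp, fun φ => by simpa using h φ⟩,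
      range_one_sub_tripleDualProj⟩

lemma norm_ctranspose_ctranspose_ctranspose_mkQL {X : Type*} [NormedAddCommGroup X]
    [NormedSpace ℂ X] (Y : Submodule ℂ X) [IsClosed (Y : Set X)]
    (φ : Dual ℂ (Dual ℂ (Dual ℂ (X ⧸ Y)))) :
    ‖ctranspose (ctranspose (ctranspose Y.mkQL)) φ‖ = ‖φ‖ := by
  have hq (ψ : Dual ℂ (X ⧸ Y)) : ‖ctranspose Y.mkQL ψ‖ = ‖ψ‖ :=
    norm_ctranspose_apply_eq (Submodule.Quotient.norm_mk_le Y)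
      (fun y _ hε => Submodule.Quotient.norm_mk_lt y hε) ψ
  refine norm_ctranspose_apply_eq (norm_ctranspose_apply_le fun ψ => (hq ψ).le)
    (fun Ψ ε hε => ?_) φ
  obtain ⟨Φ, hΦ, hnorm⟩ := exists_ctranspose_apply_eq_of_norm_map hq Ψ
  exact ⟨Φ, hΦ, by linarith⟩

theorem MEmbedded.quotient_general
    (X : Type*) [NormedAddCommGroup X] [NormedSpace ℂ X]
    (hX : MEmbedded X) (Y : Subspace ℂ X) [IsClosed (Y : Set X)] :
    MEmbedded (X ⧸ Y) := by
  rw [mEmbedded_iff_norm_eq] at hX ⊢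
  intro φ
  set T := ctranspose (ctranspose (ctranspose Y.mkQL))
  have hT := norm_ctranspose_ctranspose_ctranspose_mkQL Y
  calc ‖φ‖ = ‖T φ‖ := (hT φ).symm
    _ = ‖T φ - tripleDualProj X (T φ)‖ + ‖tripleDualProj X (T φ)‖ := hX (T φ)
    _ = ‖φ - tripleDualProj (X ⧸ Y) φ‖ + ‖tripleDualProj (X ⧸ Y) φ‖ := by
        rw [tripleDualProj_ctranspose_ctranspose_ctranspose, ← map_sub, hT, hT]

/-- The quotient of an M-embedded complex Banach space by a closed subspace is
M-embedded. -/
theorem MEmbedded.quotient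
    (X : Type*) [NormedAddCommGroup X] [NormedSpace ℂ X] [CompleteSpace X]
    (hX : MEmbedded X) (Y : Subspace ℂ X) [IsClosed (Y : Set X)] :
    MEmbedded (X ⧸ Y) :=
  MEmbedded.quotient_general X hX Y
end
end

section
/- Let X be a complex Banach space. Then the following are equivalent: (i) the canonical projection π_{X*} is the only contractive linear projection on X*** whose kernel is i_X(X)^⊥; (ii) the only contractive linear operator T on X** satisfying T(i_X(x)) = i_X(x) for all x ∈ X is the identity operator on X**; (iii) for every surjective linear isometry U : X → X, the only contractive linear operator T on X** satisfying T ∘ i_X = i_X ∘ U is U**, the double transpose of U. -/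
open NormedSpace

noncomputable section

set_option maxHeartbeats 1000000

/-!
Write `i = i_X`, `i' = i_{X*}` and `π` for the canonical projection. A contractive `T` on `X**`
fixing `i(X)` yields the contractive projection `Tᵗ ∘ π` on `X***` with kernel `i(X)^⊥`, and
`Tᵗ ∘ π = π` forces `T = id`. Conversely a contractive projection `Q` with that kernel yields
the contractive operator `z ↦ (f ↦ Q (i' f) z)` on `X**` fixing `i(X)`; if it is the identity
then `Q` agrees with `π` on `i'(X*)`, hence everywhere, since `Q` kills `φ - π φ`.
For (ii) ⇔ (iii), a contractive `T` with `T ∘ i = i ∘ U` gives the contractive `(U⁻¹)** ∘ T`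
fixing `i(X)`, because double transposes commute with `i`.
-/

open ContinuousLinearMap

lemma ContinuousLinearMap.norm_comp_le_one {𝕜 E F G : Type*} [NontriviallyNormedField 𝕜]
    [SeminormedAddCommGroup E] [NormedSpace 𝕜 E] [SeminormedAddCommGroup F] [NormedSpace 𝕜 F]
    [SeminormedAddCommGroup G] [NormedSpace 𝕜 G] {g : F →L[𝕜] G} {f : E →L[𝕜] F}
    (hg : ‖g‖ ≤ 1) (hf : ‖f‖ ≤ 1) :
    ‖g ∘L f‖ ≤ 1 :=
  (opNorm_comp_le g f).trans (mul_le_one₀ hg (norm_nonneg f) hf)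

section Transpose

variable {E F : Type*} [SeminormedAddCommGroup E] [NormedSpace ℂ E]
  [SeminormedAddCommGroup F] [NormedSpace ℂ F]

@[simp]
lemma ctranspose_apply (f : E →L[ℂ] F) (g : Dual ℂ F) : ctranspose f g = g ∘L f := rfl

lemma norm_ctranspose_le (f : E →L[ℂ] F) : ‖ctranspose f‖ ≤ ‖f‖ :=
  opNorm_le_bound _ (norm_nonneg f) fun g => (opNorm_comp_le g f).trans_eq (mul_comm _ _)

lemma ctranspose_id : ctranspose (ContinuousLinearMap.id ℂ E) = ContinuousLinearMap.id ℂ _ := rfl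

lemma ctranspose_ctranspose_inclusionInDoubleDual (f : E →L[ℂ] F) (x : E) :
    ctranspose (ctranspose f) (inclusionInDoubleDual ℂ E x) = inclusionInDoubleDual ℂ F (f x) :=
  rfl

end Transpose

section CanonicalProjection

variable (X : Type*) [SeminormedAddCommGroup X] [NormedSpace ℂ X]

abbrev canonicalProjection : Dual ℂ (Dual ℂ (Dual ℂ X)) →L[ℂ] Dual ℂ (Dual ℂ (Dual ℂ X)) :=
  inclusionInDoubleDual ℂ (Dual ℂ X) ∘L ctranspose (inclusionInDoubleDual ℂ X)

variable {X}
  {Q : Dual ℂ (Dual ℂ (Dual ℂ X)) →L[ℂ] Dual ℂ (Dual ℂ (Dual ℂ X))}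

@[simp]
lemma inclusionInDoubleDual_comp_inclusionInDoubleDual (f : Dual ℂ X) :
    inclusionInDoubleDual ℂ _ f ∘L inclusionInDoubleDual ℂ X = f := rfl

lemma comp_canonicalProjection_of_ker_eq
    (hker : {φ | Q φ = 0} = {φ | ∀ x : X, φ (inclusionInDoubleDual ℂ X x) = 0}) :
    Q ∘L canonicalProjection X = Q := by
  ext1 φ
  have hmem : Q (φ - canonicalProjection X φ) = 0 :=
    (Set.ext_iff.mp hker _).mpr fun x => by simp
  exact (sub_eq_zero.mp (by rwa [map_sub] at hmem)).symm

lemma eq_canonicalProjection_of_ker_eq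
    (hker : {φ | Q φ = 0} = {φ | ∀ x : X, φ (inclusionInDoubleDual ℂ X x) = 0})
    (hfix : ∀ f, Q (inclusionInDoubleDual ℂ _ f) = inclusionInDoubleDual ℂ _ f) :
    Q = canonicalProjection X := by
  rw [← comp_canonicalProjection_of_ker_eq hker]
  ext1 φ
  exact hfix _

end CanonicalProjection

section BidualToTripleDual

variable {X : Type*} [SeminormedAddCommGroup X] [NormedSpace ℂ X]

def transposeProjection (T : Dual ℂ (Dual ℂ X) →L[ℂ] Dual ℂ (Dual ℂ X)) :
    Dual ℂ (Dual ℂ (Dual ℂ X)) →L[ℂ] Dual ℂ (Dual ℂ (Dual ℂ X)) :=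
  ctranspose T ∘L canonicalProjection X

variable {T : Dual ℂ (Dual ℂ X) →L[ℂ] Dual ℂ (Dual ℂ X)}

lemma transposeProjection_apply (φ : Dual ℂ (Dual ℂ (Dual ℂ X))) (z : Dual ℂ (Dual ℂ X)) :
    transposeProjection T φ z = T z (φ ∘L inclusionInDoubleDual ℂ X) := rfl

lemma norm_transposeProjection_le (hT : ‖T‖ ≤ 1) : ‖transposeProjection T‖ ≤ 1 :=
  norm_comp_le_one ((norm_ctranspose_le T).trans hT) <|
    norm_comp_le_one (inclusionInDoubleDual_norm_le ℂ _)
      ((norm_ctranspose_le _).trans (inclusionInDoubleDual_norm_le ℂ _))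

lemma transposeProjection_comp_inclusionInDoubleDual
    (hfix : ∀ x : X, T (inclusionInDoubleDual ℂ X x) = inclusionInDoubleDual ℂ X x)
    (φ : Dual ℂ (Dual ℂ (Dual ℂ X))) :
    transposeProjection T φ ∘L inclusionInDoubleDual ℂ X = φ ∘L inclusionInDoubleDual ℂ X := by
  ext x
  simp [transposeProjection_apply, hfix]

lemma transposeProjection_idem
    (hfix : ∀ x : X, T (inclusionInDoubleDual ℂ X x) = inclusionInDoubleDual ℂ X x)
    (φ : Dual ℂ (Dual ℂ (Dual ℂ X))) :
    transposeProjection T (transposeProjection T φ) = transposeProjection T φ := by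
  ext z
  rw [transposeProjection_apply, transposeProjection_apply,
    transposeProjection_comp_inclusionInDoubleDual hfix]

lemma transposeProjection_ker
    (hfix : ∀ x : X, T (inclusionInDoubleDual ℂ X x) = inclusionInDoubleDual ℂ X x) :
    {φ | transposeProjection T φ = 0} = {φ | ∀ x : X, φ (inclusionInDoubleDual ℂ X x) = 0} := by
  ext φ
  have hzero :
      φ ∘L inclusionInDoubleDual ℂ X = 0 ↔ ∀ x : X, φ (inclusionInDoubleDual ℂ X x) = 0 :=
    ContinuousLinearMap.ext_iff
  rw [Set.mem_ofPred_eq, Set.mem_ofPred_eq, ← hzero]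
  constructor
  · intro h
    rw [← transposeProjection_comp_inclusionInDoubleDual hfix, h, zero_comp]
  · intro h
    ext z
    simp [transposeProjection_apply, h]

lemma eq_id_of_transposeProjection_eq (h : transposeProjection T = canonicalProjection X) :
    T = ContinuousLinearMap.id ℂ _ := by
  ext z f
  simpa [transposeProjection_apply] using
    congr($h (inclusionInDoubleDual ℂ _ f) z)

end BidualToTripleDual

section TripleDualToBidual

variable {X : Type*} [SeminormedAddCommGroup X] [NormedSpace ℂ X]

def bidualOfProjection (Q : Dual ℂ (Dual ℂ (Dual ℂ X)) →L[ℂ] Dual ℂ (Dual ℂ (Dual ℂ X))) :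
    Dual ℂ (Dual ℂ X) →L[ℂ] Dual ℂ (Dual ℂ X) :=
  ctranspose (Q ∘L inclusionInDoubleDual ℂ (Dual ℂ X)) ∘L
    inclusionInDoubleDual ℂ (Dual ℂ (Dual ℂ X))

variable {Q : Dual ℂ (Dual ℂ (Dual ℂ X)) →L[ℂ] Dual ℂ (Dual ℂ (Dual ℂ X))}

lemma bidualOfProjection_apply (z : Dual ℂ (Dual ℂ X)) (f : Dual ℂ X) :
    bidualOfProjection Q z f = Q (inclusionInDoubleDual ℂ _ f) z := rfl

lemma norm_bidualOfProjection_le (hQ : ‖Q‖ ≤ 1) : ‖bidualOfProjection Q‖ ≤ 1 :=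
  norm_comp_le_one
    ((norm_ctranspose_le _).trans (norm_comp_le_one hQ (inclusionInDoubleDual_norm_le ℂ _)))
    (inclusionInDoubleDual_norm_le ℂ _)

lemma apply_inclusionInDoubleDual_of_ker_eq (hidem : ∀ φ, Q (Q φ) = Q φ)
    (hker : {φ | Q φ = 0} = {φ | ∀ x : X, φ (inclusionInDoubleDual ℂ X x) = 0})
    (φ : Dual ℂ (Dual ℂ (Dual ℂ X))) (x : X) :
    Q φ (inclusionInDoubleDual ℂ X x) = φ (inclusionInDoubleDual ℂ X x) := by
  have hmem : Q (φ - Q φ) = 0 := by rw [map_sub, hidem, sub_self]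
  have := (Set.ext_iff.mp hker _).mp hmem x
  rwa [sub_apply, sub_eq_zero, eq_comm] at this

lemma bidualOfProjection_inclusionInDoubleDual (hidem : ∀ φ, Q (Q φ) = Q φ)
    (hker : {φ | Q φ = 0} = {φ | ∀ x : X, φ (inclusionInDoubleDual ℂ X x) = 0}) (x : X) :
    bidualOfProjection Q (inclusionInDoubleDual ℂ X x) = inclusionInDoubleDual ℂ X x := by
  ext f
  rw [bidualOfProjection_apply, apply_inclusionInDoubleDual_of_ker_eq hidem hker]
  rfl

lemma eq_canonicalProjection_of_bidualOfProjection_eq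
    (hker : {φ | Q φ = 0} = {φ | ∀ x : X, φ (inclusionInDoubleDual ℂ X x) = 0})
    (h : bidualOfProjection Q = ContinuousLinearMap.id ℂ _) :
    Q = canonicalProjection X :=
  eq_canonicalProjection_of_ker_eq hker fun f => by
    ext z
    exact congr($h z f)

end TripleDualToBidual

section Bitranspose

variable {X Y : Type*} [SeminormedAddCommGroup X] [NormedSpace ℂ X]
  [SeminormedAddCommGroup Y] [NormedSpace ℂ Y] (e : X ≃L[ℂ] Y)
  {T : Dual ℂ (Dual ℂ X) →L[ℂ] Dual ℂ (Dual ℂ Y)}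

lemma norm_ctranspose_ctranspose_symm_comp_le (he : ‖(e.symm : Y →L[ℂ] X)‖ ≤ 1)
    (hT : ‖T‖ ≤ 1) : ‖ctranspose (ctranspose (e.symm : Y →L[ℂ] X)) ∘L T‖ ≤ 1 :=
  norm_comp_le_one ((norm_ctranspose_le _).trans ((norm_ctranspose_le _).trans he)) hT

lemma ctranspose_ctranspose_symm_comp_inclusionInDoubleDual
    (hT : ∀ x : X, T (inclusionInDoubleDual ℂ X x) = inclusionInDoubleDual ℂ Y (e x)) (x : X) :
    (ctranspose (ctranspose (e.symm : Y →L[ℂ] X)) ∘L T) (inclusionInDoubleDual ℂ X x) =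
      inclusionInDoubleDual ℂ X x := by
  rw [comp_apply, hT, ctranspose_ctranspose_inclusionInDoubleDual]
  simp

lemma eq_ctranspose_ctranspose_of_symm_comp_eq_id
    (h : ctranspose (ctranspose (e.symm : Y →L[ℂ] X)) ∘L T = ContinuousLinearMap.id ℂ _) :
    T = ctranspose (ctranspose (e : X →L[ℂ] Y)) :=
  calc T = ctranspose (ctranspose ((e : X →L[ℂ] Y) ∘L (e.symm : Y →L[ℂ] X))) ∘L T := by
        rw [ContinuousLinearEquiv.coe_comp_coe_symm, ctranspose_id, ctranspose_id, id_comp]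
    _ = ctranspose (ctranspose (e : X →L[ℂ] Y)) ∘L
          (ctranspose (ctranspose (e.symm : Y →L[ℂ] X)) ∘L T) := rfl
    _ = ctranspose (ctranspose (e : X →L[ℂ] Y)) := by rw [h, comp_id]

end Bitranspose

theorem unique_extension_property_tfae_general
    (X : Type*) [NormedAddCommGroup X] [NormedSpace ℂ X] :
    ((∀ Q : Dual ℂ (Dual ℂ (Dual ℂ X)) →L[ℂ] Dual ℂ (Dual ℂ (Dual ℂ X)),
        ‖Q‖ ≤ 1 → (∀ φ, Q (Q φ) = Q φ) →
        ({φ : Dual ℂ (Dual ℂ (Dual ℂ X)) | Q φ = 0} =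
          {φ : Dual ℂ (Dual ℂ (Dual ℂ X)) | ∀ x : X, φ (inclusionInDoubleDual ℂ X x) = 0}) →
        Q = (inclusionInDoubleDual ℂ (Dual ℂ X)) ∘L
          ctranspose (E := X) (F := Dual ℂ (Dual ℂ X)) (inclusionInDoubleDual ℂ X)) ↔
      (∀ T : Dual ℂ (Dual ℂ X) →L[ℂ] Dual ℂ (Dual ℂ X), ‖T‖ ≤ 1 →
        (∀ x : X, T (inclusionInDoubleDual ℂ X x) = inclusionInDoubleDual ℂ X x) →
        T = ContinuousLinearMap.id ℂ (Dual ℂ (Dual ℂ X)))) ∧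
    ((∀ T : Dual ℂ (Dual ℂ X) →L[ℂ] Dual ℂ (Dual ℂ X), ‖T‖ ≤ 1 →
        (∀ x : X, T (inclusionInDoubleDual ℂ X x) = inclusionInDoubleDual ℂ X x) →
        T = ContinuousLinearMap.id ℂ (Dual ℂ (Dual ℂ X))) ↔
      (∀ U : X →ₗᵢ[ℂ] X, Function.Surjective U →
        ∀ T : Dual ℂ (Dual ℂ X) →L[ℂ] Dual ℂ (Dual ℂ X), ‖T‖ ≤ 1 →
        (∀ x : X, T (inclusionInDoubleDual ℂ X x) = inclusionInDoubleDual ℂ X (U x)) →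
        T = ctranspose (ctranspose U.toContinuousLinearMap))) := by
  refine ⟨⟨fun h T hT hfix => ?_, fun h Q hQ hidem hker => ?_⟩,
    ⟨fun h U hU T hT hcomm => ?_, fun h T hT hfix => ?_⟩⟩
  · exact eq_id_of_transposeProjection_eq <| h _ (norm_transposeProjection_le hT)
      (transposeProjection_idem hfix) (transposeProjection_ker hfix)
  · exact eq_canonicalProjection_of_bidualOfProjection_eq hker <| h _
      (norm_bidualOfProjection_le hQ) (bidualOfProjection_inclusionInDoubleDual hidem hker)
  · let e := (LinearIsometryEquiv.ofSurjective U hU).toContinuousLinearEquiv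
    have he : ‖(e.symm : X →L[ℂ] X)‖ ≤ 1 :=
      (LinearIsometryEquiv.ofSurjective U hU).symm.toLinearIsometry.norm_toContinuousLinearMap_le
    exact eq_ctranspose_ctranspose_of_symm_comp_eq_id e <| h _
      (norm_ctranspose_ctranspose_symm_comp_le e he hT)
      (ctranspose_ctranspose_symm_comp_inclusionInDoubleDual e hcomm)
  · exact h LinearIsometry.id Function.surjective_id T hT hfix

/-- For a complex Banach space `X`, the following are equivalent:
(i) the canonical projection `π_{X*} = i_{X*} ∘ (i_X)^t` is the only contractive linear
projection on `X***` with kernel `i_X(X)^⊥`;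
(ii) the only contractive linear operator on `X**` restricting to the identity on `i_X(X)`
is the identity;
(iii) for every surjective linear isometry `U` of `X`, the only contractive linear operator
`T` on `X**` with `T ∘ i_X = i_X ∘ U` is the double transpose `U**`. -/
theorem unique_extension_property_tfae
    (X : Type*) [NormedAddCommGroup X] [NormedSpace ℂ X] [CompleteSpace X] :
    ((∀ Q : Dual ℂ (Dual ℂ (Dual ℂ X)) →L[ℂ] Dual ℂ (Dual ℂ (Dual ℂ X)),
        ‖Q‖ ≤ 1 → (∀ φ, Q (Q φ) = Q φ) →
        ({φ : Dual ℂ (Dual ℂ (Dual ℂ X)) | Q φ = 0} =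
          {φ : Dual ℂ (Dual ℂ (Dual ℂ X)) | ∀ x : X, φ (inclusionInDoubleDual ℂ X x) = 0}) →
        Q = (inclusionInDoubleDual ℂ (Dual ℂ X)) ∘L
          ctranspose (E := X) (F := Dual ℂ (Dual ℂ X)) (inclusionInDoubleDual ℂ X)) ↔
      (∀ T : Dual ℂ (Dual ℂ X) →L[ℂ] Dual ℂ (Dual ℂ X), ‖T‖ ≤ 1 →
        (∀ x : X, T (inclusionInDoubleDual ℂ X x) = inclusionInDoubleDual ℂ X x) →
        T = ContinuousLinearMap.id ℂ (Dual ℂ (Dual ℂ X)))) ∧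
    ((∀ T : Dual ℂ (Dual ℂ X) →L[ℂ] Dual ℂ (Dual ℂ X), ‖T‖ ≤ 1 →
        (∀ x : X, T (inclusionInDoubleDual ℂ X x) = inclusionInDoubleDual ℂ X x) →
        T = ContinuousLinearMap.id ℂ (Dual ℂ (Dual ℂ X))) ↔
      (∀ U : X →ₗᵢ[ℂ] X, Function.Surjective U →
        ∀ T : Dual ℂ (Dual ℂ X) →L[ℂ] Dual ℂ (Dual ℂ X), ‖T‖ ≤ 1 →
        (∀ x : X, T (inclusionInDoubleDual ℂ X x) = inclusionInDoubleDual ℂ X (U x)) →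
        T = ctranspose (ctranspose U.toContinuousLinearMap))) :=
  unique_extension_property_tfae_general X
end
end
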